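/- For real numbers K, k, b, θ_P > 0 and integers n, f with 3f < n and K ≥ (n-f)·k, if Δ' > (K - f·k)·b/θ_P, then the protocol output θ' = K·b·(n-2f)/(Δ'·(n-f)) satisfies θ' ≤ θ_P. -/
import Mathlib

theorem pob_soundness (K k b θP Δ' : ℝ) (n f : ℤ)
    (hK : 0 < K) (hk : 0 < k) (hb : 0 < b) (hθP : 0 < θP)
    (hf : 0 ≤ f) (hn : 3 * f < n)
    (hKk : K ≥ ((n : ℝ) - f) * k)
    (hΔ : Δ' > (K - f * k) * b / θP) :
    K * b * ((n : ℝ) - 2 * f) / (Δ' * ((n : ℝ) - f)) ≤ θP := by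
  have hfR : (0:ℝ) ≤ (f:ℝ) := by exact_mod_cast hf
  have hnR : 3 * (f:ℝ) < (n:ℝ) := by exact_mod_cast hn
  have h2f : (0:ℝ) < (n:ℝ) - 2 * f := by linarith
  have hnf : (0:ℝ) < (n:ℝ) - f := by linarith
  have hKfk : (0:ℝ) < K - f * k := by nlinarith
  have hΔ0 : 0 < Δ' := lt_trans (by positivity) hΔ
  rw [div_le_iff₀ (by positivity)]
  have h1 : (K - f * k) * b < Δ' * θP := by
    rw [gt_iff_lt, div_lt_iff₀ hθP] at hΔ; linarith
  nlinarith [mul_pos hnf (mul_pos hΔ0 hθP), mul_nonneg (mul_nonneg hfR hb.le) (sub_nonneg.2 hKk)]
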